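/- Let X be a metric space, (Xₙ) a sequence of X-valued random variables and X₀ a random variable such that every pair of subsequences (X_{n_k}, X_{m_k}) has a further subsequence whose joint law converges weakly to a measure supported on the diagonal {(x,x) : x ∈ X} of X × X. If moreover the laws of (Xₙ) are tight, then (Xₙ) converges in probability (along the whole sequence it is Cauchy in probability) to some X-valued random variable. -/

import Mathlib

open MeasureTheory Filter
open scoped ENNReal Topology

/-!
Convergence of the joint laws to a measure on the diagonal forces, by the portmanteau bound for
the closed set `{ε ≤ dist x y}`, the probabilities `P (ε ≤ dist Xₙ Xₘ)` to vanish along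
sub-subsequences of any pair of subsequences, hence along all of `ℕ × ℕ`: the sequence is Cauchy
in probability. As in the proof that `L⁰` is complete, a subsequence with summable increments
converges almost surely by Borel–Cantelli, and the Cauchy property upgrades its limit to a limit
in probability of the whole sequence.
-/

theorem Filter.tendsto_atTop_prod_of_forall_strictMono_subseq {α : Type*} {a : ℕ → ℕ → α}
    {l : Filter α}
    (h : ∀ φ ψ : ℕ → ℕ, StrictMono φ → StrictMono ψ →
      ∃ ρ : ℕ → ℕ, StrictMono ρ ∧ Tendsto (fun k => a (φ (ρ k)) (ψ (ρ k))) atTop l) :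
    Tendsto (fun p : ℕ × ℕ => a p.1 p.2) atTop l := by
  refine tendsto_of_subseq_tendsto fun ns hns => ?_
  rw [← prod_atTop_atTop_eq, tendsto_prod_iff'] at hns
  obtain ⟨φ₁, hφ₁, hfst⟩ := strictMono_subseq_of_tendsto_atTop hns.1
  obtain ⟨φ₂, hφ₂, hsnd⟩ := strictMono_subseq_of_tendsto_atTop (hns.2.comp hφ₁.tendsto_atTop)
  obtain ⟨ρ, -, hρ⟩ := h _ _ (hfst.comp hφ₂) hsnd
  exact ⟨φ₁ ∘ φ₂ ∘ ρ, hρ⟩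

theorem MeasureTheory.ProbabilityMeasure.tendsto_measure_le_dist_of_tendsto_of_diagonal
    {ι X : Type*} {L : Filter ι} [MetricSpace X] [MeasurableSpace X]
    [OpensMeasurableSpace (X × X)] {μs : ι → ProbabilityMeasure (X × X)}
    {ν : ProbabilityMeasure (X × X)} (hμs : Tendsto μs L (𝓝 ν))
    (hν : ν {p : X × X | p.1 = p.2} = 1) {ε : ℝ} (hε : 0 < ε) :
    Tendsto (fun i => (μs i : Measure (X × X)) {p | ε ≤ dist p.1 p.2}) L (𝓝 0) := by
  have hclosed : IsClosed {p : X × X | ε ≤ dist p.1 p.2} :=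
    isClosed_le continuous_const continuous_dist
  have hoff_diag : {p : X × X | ε ≤ dist p.1 p.2} ⊆ {p | p.1 = p.2}ᶜ := by
    rintro p (hp : ε ≤ dist p.1 p.2) (heq : p.1 = p.2)
    rw [heq, dist_self] at hp
    exact hε.not_ge hp
  have hν0 : (ν : Measure (X × X)) {p | ε ≤ dist p.1 p.2} = 0 := by
    refine measure_mono_null hoff_diag ?_
    rw [prob_compl_eq_zero_iff (isClosed_eq continuous_fst continuous_snd).measurableSet,
      ← ProbabilityMeasure.ennreal_coeFn_eq_coeFn_toMeasure, hν, ENNReal.coe_one]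
  refine tendsto_of_le_liminf_of_limsup_le zero_le ?_
  exact hν0 ▸ ProbabilityMeasure.limsup_measure_closed_le_of_tendsto hμs hclosed

namespace MeasureTheory

variable {α E : Type*} [MeasurableSpace α] {μ : Measure α} [PseudoMetricSpace E]

def CauchyInMeasure (μ : Measure α) (f : ℕ → α → E) : Prop :=
  ∀ ε, 0 < ε → Tendsto (fun p : ℕ × ℕ => μ {x | ε ≤ dist (f p.1 x) (f p.2 x)}) atTop (𝓝 0)

theorem ae_cauchySeq_of_summable_measure_le_dist_succ {g : ℕ → α → E} {ε : ℕ → ℝ}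
    (hε : Summable ε) (hμ : ∑' k, μ {x | ε k ≤ dist (g k x) (g (k + 1) x)} ≠ ∞) :
    ∀ᵐ x ∂μ, CauchySeq fun k => g k x := by
  filter_upwards [ae_eventually_notMem hμ] with x hx
  refine cauchySeq_of_summable_dist (hε.of_norm_bounded_eventually_nat ?_)
  filter_upwards [hx] with k hk
  rw [Real.norm_of_nonneg dist_nonneg]
  exact (not_le.1 hk).le

namespace CauchyInMeasure

variable {f : ℕ → α → E}

theorem exists_strictMono_measure_le_dist_succ_le (hf : CauchyInMeasure μ f) :
    ∃ u : ℕ → ℕ, StrictMono u ∧ ∀ k,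
      μ {x | (2⁻¹ : ℝ) ^ k ≤ dist (f (u k) x) (f (u (k + 1)) x)} ≤ 2⁻¹ ^ k := by
  have hN : ∀ k : ℕ, ∃ N, ∀ n ≥ N, ∀ m ≥ n,
      μ {x | (2⁻¹ : ℝ) ^ k ≤ dist (f n x) (f m x)} ≤ 2⁻¹ ^ k := fun k => by
    have hk := (hf ((2⁻¹ : ℝ) ^ k) (by positivity)).eventually
      (ge_mem_nhds (ENNReal.pow_pos (ENNReal.inv_pos.2 (ENNReal.ofNat_ne_top (n := 2))) k))
    obtain ⟨N, hN⟩ := eventually_atTop_prod_self'.1 hk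
    exact ⟨N, fun n hn m hm => hN n hn m (hn.trans hm)⟩
  obtain ⟨u, hu, hbound⟩ := extraction_forall_of_eventually' hN
  exact ⟨u, hu, fun k => hbound k (u (k + 1)) (hu k.lt_succ_self).le⟩

theorem exists_strictMono_ae_cauchySeq (hf : CauchyInMeasure μ f) :
    ∃ u : ℕ → ℕ, StrictMono u ∧ ∀ᵐ x ∂μ, CauchySeq fun k => f (u k) x := by
  obtain ⟨u, hu, hbound⟩ := hf.exists_strictMono_measure_le_dist_succ_le
  refine ⟨u, hu, ae_cauchySeq_of_summable_measure_le_dist_succ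
    (summable_geometric_of_lt_one (by norm_num : (0 : ℝ) ≤ 2⁻¹) (by norm_num)) ?_⟩
  refine ne_top_of_le_ne_top ?_ (ENNReal.tsum_le_tsum hbound)
  simp [ENNReal.tsum_geometric]

theorem tendstoInMeasure_of_subseq (hf : CauchyInMeasure μ f) {u : ℕ → ℕ}
    (hu : Tendsto u atTop atTop) {g : α → E}
    (hfg : TendstoInMeasure μ (fun k => f (u k)) atTop g) :
    TendstoInMeasure μ f atTop g := by
  rw [tendstoInMeasure_iff_dist] at hfg ⊢
  intro ε hε
  have hsplit : ∀ n k, μ {x | ε ≤ dist (f n x) (g x)} ≤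
      μ {x | ε / 2 ≤ dist (f n x) (f (u k) x)} + μ {x | ε / 2 ≤ dist (f (u k) x) (g x)} := by
    intro n k
    refine (measure_mono fun x (hx : ε ≤ _) => ?_).trans (measure_union_le _ _)
    by_contra! h
    rw [Set.mem_union, not_or] at h
    have h₁ : dist (f n x) (f (u k) x) < ε / 2 := not_le.1 h.1
    have h₂ : dist (f (u k) x) (g x) < ε / 2 := not_le.1 h.2
    linarith [dist_triangle (f n x) (f (u k) x) (g x)]
  have hbound : Tendsto (fun p : ℕ × ℕ => μ {x | ε / 2 ≤ dist (f p.1 x) (f (u p.2) x)} +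
      μ {x | ε / 2 ≤ dist (f (u p.2) x) (g x)}) (atTop ×ˢ atTop) (𝓝 0) := by
    rw [← zero_add (0 : ℝ≥0∞)]
    refine Tendsto.add ?_ ((hfg _ (half_pos hε)).comp tendsto_snd)
    have hpair : Tendsto (fun p : ℕ × ℕ => (p.1, u p.2)) (atTop ×ˢ atTop) atTop := by
      rw [← prod_atTop_atTop_eq]
      exact tendsto_fst.prodMk (hu.comp tendsto_snd)
    exact (hf _ (half_pos hε)).comp hpair
  have := tendsto_of_tendsto_of_tendsto_of_le_of_le tendsto_const_nhds hbound
    (fun _ => zero_le) (fun p => hsplit p.1 p.2)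
  rw [← map_fst_prod (atTop : Filter ℕ) (atTop : Filter ℕ)]
  exact tendsto_map'_iff.2 this

theorem exists_tendstoInMeasure [CompleteSpace E] [SecondCountableTopology E]
    [MeasurableSpace E] [BorelSpace E] [IsFiniteMeasure μ]
    (hf : CauchyInMeasure μ f) (hmeas : ∀ n, Measurable (f n)) :
    ∃ g : α → E, Measurable g ∧ TendstoInMeasure μ f atTop g := by
  obtain ⟨u, hu, hcauchy⟩ := hf.exists_strictMono_ae_cauchySeq
  obtain ⟨g, hg, hlim⟩ := measurable_limit_of_tendsto_metrizable_ae
    (fun k => (hmeas (u k)).aemeasurable)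
    (hcauchy.mono fun _ => cauchySeq_tendsto_of_complete)
  exact ⟨g, hg, hf.tendstoInMeasure_of_subseq hu.tendsto_atTop
    (tendstoInMeasure_of_tendsto_ae (fun k => (hmeas (u k)).aestronglyMeasurable) hlim)⟩

end CauchyInMeasure

end MeasureTheory

theorem gyongy_krylov_criterion_general
    {Ω : Type*} [MeasurableSpace Ω] (P : Measure Ω) [IsProbabilityMeasure P]
    {X : Type*} [MetricSpace X] [CompleteSpace X] [SecondCountableTopology X]
    [MeasurableSpace X] [BorelSpace X]
    (Xs : ℕ → Ω → X) (hmeas : ∀ n, Measurable (Xs n))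
    (hdiag : ∀ φ ψ : ℕ → ℕ, StrictMono φ → StrictMono ψ →
      ∃ ρ : ℕ → ℕ, StrictMono ρ ∧
        ∃ ν : ProbabilityMeasure (X × X),
          ν {p : X × X | p.1 = p.2} = 1 ∧
          Tendsto (β := ProbabilityMeasure (X × X))
            (fun k => (⟨P.map (fun ω => (Xs (φ (ρ k)) ω, Xs (ψ (ρ k)) ω)),
              Measure.isProbabilityMeasure_map
                (((hmeas (φ (ρ k))).prodMk (hmeas (ψ (ρ k)))).aemeasurable)⟩ :
              ProbabilityMeasure (X × X)))
            atTop (𝓝 ν)) :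
    ∃ Y : Ω → X, Measurable Y ∧
      ∀ ε : ℝ, 0 < ε →
        Tendsto (fun n => P {ω | ε ≤ dist (Xs n ω) (Y ω)}) atTop (𝓝 0) := by
  have hcauchy : CauchyInMeasure P Xs := fun ε hε =>
    tendsto_atTop_prod_of_forall_strictMono_subseq
      (a := fun n m => P {ω | ε ≤ dist (Xs n ω) (Xs m ω)}) fun φ ψ hφ hψ => by
      obtain ⟨ρ, hρ, ν, hν, hlaw⟩ := hdiag φ ψ hφ hψ
      refine ⟨ρ, hρ, ?_⟩
      convert ProbabilityMeasure.tendsto_measure_le_dist_of_tendsto_of_diagonal hlaw hν hε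
        using 2 with k
      rw [ProbabilityMeasure.coe_mk, Measure.map_apply
        ((hmeas _).prodMk (hmeas _)) (measurableSet_le measurable_const measurable_dist)]
      rfl
  obtain ⟨Y, hY, hconv⟩ := hcauchy.exists_tendstoInMeasure hmeas
  exact ⟨Y, hY, tendstoInMeasure_iff_dist.1 hconv⟩

/-- Gyöngy–Krylov criterion: let `X` be a Polish space and `(Xₙ)` a tight
sequence of `X`-valued random variables such that every pair of subsequences
`(X_{n_k}, X_{m_k})` admits a further subsequence whose joint laws converge
weakly to a probability measure supported on the diagonal of `X × X`.  Then
`(Xₙ)` converges in probability to some `X`-valued random variable. -/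
theorem gyongy_krylov_criterion
    {Ω : Type*} [MeasurableSpace Ω] (P : Measure Ω) [IsProbabilityMeasure P]
    {X : Type*} [MetricSpace X] [CompleteSpace X] [SecondCountableTopology X]
    [MeasurableSpace X] [BorelSpace X]
    (Xs : ℕ → Ω → X) (hmeas : ∀ n, Measurable (Xs n))
    (htight : ∀ ε : ℝ≥0∞, 0 < ε →
      ∃ K : Set X, IsCompact K ∧ ∀ n, P ((Xs n) ⁻¹' Kᶜ) ≤ ε)
    (hdiag : ∀ φ ψ : ℕ → ℕ, StrictMono φ → StrictMono ψ →
      ∃ ρ : ℕ → ℕ, StrictMono ρ ∧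
        ∃ ν : ProbabilityMeasure (X × X),
          ν {p : X × X | p.1 = p.2} = 1 ∧
          Tendsto (β := ProbabilityMeasure (X × X))
            (fun k => (⟨P.map (fun ω => (Xs (φ (ρ k)) ω, Xs (ψ (ρ k)) ω)),
              Measure.isProbabilityMeasure_map
                (((hmeas (φ (ρ k))).prodMk (hmeas (ψ (ρ k)))).aemeasurable)⟩ :
              ProbabilityMeasure (X × X)))
            atTop (𝓝 ν)) :
    ∃ Y : Ω → X, Measurable Y ∧
      ∀ ε : ℝ, 0 < ε →
        Tendsto (fun n => P {ω | ε ≤ dist (Xs n ω) (Y ω)}) atTop (𝓝 0) :=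
  gyongy_krylov_criterion_general P Xs hmeas hdiag
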